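/- Let K > 0, n > 1, and ρ > 0. Define α = √(K/(n−1)) and f(s) = cosh(αs) + ((1 − cosh(ρα))/sinh(ρα))·sinh(αs) for s ∈ [0,ρ]. Then f(0) = f(ρ) = 1 and ∫₀^ρ [ (n−1) f'(s)² + K f(s)² ] ds = 2·√(K(n−1))·tanh(ρα/2). -/

import Mathlib

open Real

theorem stmt9 (K n ρ : ℝ) (hK : 0 < K) (hn : 1 < n) (hρ : 0 < ρ)
    (α : ℝ) (hα : α = Real.sqrt (K / (n - 1)))
    (f : ℝ → ℝ)
    (hf : ∀ s : ℝ, f s = Real.cosh (α * s)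
      + ((1 - Real.cosh (ρ * α)) / Real.sinh (ρ * α)) * Real.sinh (α * s)) :
    f 0 = 1 ∧ f ρ = 1 ∧
    (∫ s in (0 : ℝ)..ρ, ((n - 1) * (deriv f s) ^ 2 + K * (f s) ^ 2))
      = 2 * Real.sqrt (K * (n - 1)) * Real.tanh (ρ * α / 2) := by
  have hn1 : (0:ℝ) < n - 1 := by linarith
  have hα2 : α ^ 2 = K / (n - 1) := by
    rw [hα, Real.sq_sqrt (by positivity)]
  have hαpos : 0 < α := by rw [hα]; positivity
  have hK' : K = (n - 1) * α ^ 2 := by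
    rw [hα2]; field_simp
  set c : ℝ := (1 - Real.cosh (ρ * α)) / Real.sinh (ρ * α) with hc
  have hxpos : 0 < ρ * α := by positivity
  have hsx : 0 < Real.sinh (ρ * α) := Real.sinh_pos_iff.2 hxpos
  have hf0 : f 0 = 1 := by simp [hf]
  have hfρ : f ρ = 1 := by
    rw [hf, mul_comm α ρ, hc]
    field_simp
    ring
  refine ⟨hf0, hfρ, ?_⟩
  have hmul : ∀ s : ℝ, HasDerivAt (fun x : ℝ => α * x) α s := by
    intro s
    simpa using (hasDerivAt_id s).const_mul α
  have hderiv : ∀ s : ℝ, HasDerivAt f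
      (Real.sinh (α * s) * α + c * (Real.cosh (α * s) * α)) s := by
    intro s
    have hfe : f = fun s => Real.cosh (α * s) + c * Real.sinh (α * s) := funext hf
    rw [hfe]
    exact ((Real.hasDerivAt_cosh (α*s)).comp s (hmul s)).add
      (((Real.hasDerivAt_sinh (α*s)).comp s (hmul s)).const_mul c)
  have hfun : (fun s => (n - 1) * (deriv f s) ^ 2 + K * (f s) ^ 2)
      = fun s => (n - 1) * (Real.sinh (α * s) * α + c * (Real.cosh (α * s) * α)) ^ 2
        + K * (Real.cosh (α * s) + c * Real.sinh (α * s)) ^ 2 := by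
    funext s
    rw [(hderiv s).deriv, hf]
  rw [show (∫ s in (0:ℝ)..ρ, ((n - 1) * (deriv f s) ^ 2 + K * (f s) ^ 2))
      = ∫ s in (0:ℝ)..ρ, ((n - 1) * (Real.sinh (α * s) * α + c * (Real.cosh (α * s) * α)) ^ 2
        + K * (Real.cosh (α * s) + c * Real.sinh (α * s)) ^ 2) from by rw [hfun]]
  set F : ℝ → ℝ := fun s => (n - 1) * ((Real.cosh (α * s) + c * Real.sinh (α * s))
      * (Real.sinh (α * s) * α + c * (Real.cosh (α * s) * α))) with hF
  have hFd : ∀ s : ℝ, HasDerivAt F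
      ((n - 1) * (Real.sinh (α * s) * α + c * (Real.cosh (α * s) * α)) ^ 2
        + K * (Real.cosh (α * s) + c * Real.sinh (α * s)) ^ 2) s := by
    intro s
    have h1 : HasDerivAt (fun s => Real.cosh (α * s) + c * Real.sinh (α * s))
        (Real.sinh (α * s) * α + c * (Real.cosh (α * s) * α)) s :=
      ((Real.hasDerivAt_cosh (α*s)).comp s (hmul s)).add
        (((Real.hasDerivAt_sinh (α*s)).comp s (hmul s)).const_mul c)
    have h2 : HasDerivAt (fun s => Real.sinh (α * s) * α + c * (Real.cosh (α * s) * α))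
        (Real.cosh (α * s) * α * α + c * (Real.sinh (α * s) * α * α)) s := by
      exact (((Real.hasDerivAt_sinh (α*s)).comp s (hmul s)).mul_const α).add
        ((((Real.hasDerivAt_cosh (α*s)).comp s (hmul s)).mul_const α).const_mul c)
    have h3 := (h1.mul h2).const_mul (n - 1)
    refine h3.congr_deriv ?_
    rw [hK']
    ring
  have hcont : Continuous (fun s => (n - 1) * (Real.sinh (α * s) * α + c * (Real.cosh (α * s) * α)) ^ 2
        + K * (Real.cosh (α * s) + c * Real.sinh (α * s)) ^ 2) := by
    fun_prop
  rw [intervalIntegral.integral_eq_sub_of_hasDerivAt (fun s _ => hFd s)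
    (hcont.intervalIntegrable 0 ρ)]
  have hs : Real.sqrt (K * (n - 1)) = (n - 1) * α := by
    rw [show K * (n - 1) = ((n - 1) * α) ^ 2 by rw [hK']; ring,
      Real.sqrt_sq (by positivity)]
  rw [hs, hF]
  simp only [mul_zero, Real.cosh_zero, Real.sinh_zero, zero_mul, mul_one, add_zero, zero_add]
  rw [mul_comm α ρ, hc]
  have hcu : 0 < Real.cosh (ρ * α / 2) := Real.cosh_pos _
  have hsu : 0 < Real.sinh (ρ * α / 2) := Real.sinh_pos_iff.2 (by positivity)
  rw [show ρ * α = 2 * (ρ * α / 2) by ring, Real.cosh_two_mul, Real.sinh_two_mul,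
    Real.tanh_eq_sinh_div_cosh]
  have hid2 : Real.cosh (ρ * α / 2) ^ 2 - Real.sinh (ρ * α / 2) ^ 2 = 1 :=
    Real.cosh_sq_sub_sinh_sq _
  have hsx' : Real.sinh (ρ * α / 2) ≠ 0 := ne_of_gt hsu
  have hcx' : Real.cosh (ρ * α / 2) ≠ 0 := ne_of_gt hcu
  field_simp
  linear_combination (-1 *
    (Real.cosh (ρ * α / 2) ^ 2 - Real.sinh (ρ * α / 2) ^ 2 - 1)) * hid2
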